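/- arXiv:2408.01109 — 2 statements merged into one kernel-verified Lean document; each statement's English description precedes it below -/
import Mathlib

section
/- For a collection C of databases (closed under isomorphisms) over a schema S and an integer n ≥ 0, the following are equivalent: (1) C is (n,0)-local; (2) C is domain independent, n-modular, and closed under subdatabases. -/
namespace DB

/-- A relational database over a schema `S` with arity function `ar`,
with constants drawn from the type `Const`.  It has a finite domain and
one relation per relation symbol, whose tuples lie in the domain. -/
structure Database (S : Type) (ar : S → ℕ) (Const : Type) where
  dom : Finset Const
  rel : ∀ R : S, Set (Fin (ar R) → Const)
  rel_dom : ∀ R : S, ∀ t ∈ rel R, ∀ i, t i ∈ dom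

variable {S Const C1 C2 : Type} {ar : S → ℕ}

/-- A relational atom over a set `V` of variables: a relation symbol together
with a tuple of variables of the appropriate arity. -/
def Atom (S : Type) (ar : S → ℕ) (V : Type) : Type := Σ R : S, Fin (ar R) → V

/-- The atom `a` holds in `D` under the assignment `h`. -/
def holdsAtom {V : Type} (D : Database S ar Const) (h : V → Const) (a : Atom S ar V) : Prop :=
  (fun i => h (a.2 i)) ∈ D.rel a.1

/-- A tuple-generating dependency `∀ x̄ ∀ ȳ (φ(x̄,ȳ) → ∃ z̄ ψ(x̄,z̄))`.
The universally quantified variables are `Fin nx ⊕ Fin ny` (the frontier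
variables `x̄` being `Fin nx`), the existentially quantified ones `Fin nz`.
As the notation `φ(x̄,ȳ)` indicates, every universally quantified variable
occurs in the body, and the head is a non-empty conjunction of atoms. -/
structure TGD (S : Type) (ar : S → ℕ) where
  nx : ℕ
  ny : ℕ
  nz : ℕ
  body : List (Atom S ar (Fin nx ⊕ Fin ny))
  head : List (Atom S ar (Fin nx ⊕ Fin nz))
  head_ne : head ≠ []
  body_vars : ∀ v : Fin nx ⊕ Fin ny, ∃ a ∈ body, ∃ i, a.2 i = v

/-- A tgd is full if it has no existentially quantified variables. -/
def TGD.Full (σ : TGD S ar) : Prop := σ.nz = 0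

/-- Satisfaction of a tgd by a database. -/
def SatTGD (D : Database S ar Const) (σ : TGD S ar) : Prop :=
  ∀ h : Fin σ.nx ⊕ Fin σ.ny → Const,
    (∀ v, h v ∈ D.dom) →
    (∀ a ∈ σ.body, holdsAtom D h a) →
    ∃ g : Fin σ.nz → Const, (∀ v, g v ∈ D.dom) ∧
      ∀ a ∈ σ.head, holdsAtom D (Sum.elim (fun x => h (Sum.inl x)) g) a

/-- An equality-generating dependency `∀ x̄ (φ(x̄) → x_i = x_j)`, with a
non-empty body mentioning all of the variables `x̄`. -/
structure EGD (S : Type) (ar : S → ℕ) where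
  nx : ℕ
  body : List (Atom S ar (Fin nx))
  body_ne : body ≠ []
  body_vars : ∀ v : Fin nx, ∃ a ∈ body, ∃ i, a.2 i = v
  lhs : Fin nx
  rhs : Fin nx

/-- Satisfaction of an egd by a database. -/
def SatEGD (D : Database S ar Const) (θ : EGD S ar) : Prop :=
  ∀ h : Fin θ.nx → Const, (∀ v, h v ∈ D.dom) →
    (∀ a ∈ θ.body, holdsAtom D h a) → h θ.lhs = h θ.rhs

/-- `Sub D' D` : `D'` is a subdatabase of `D` (written `D' ⪯ D`). -/
def Sub (D' D : Database S ar Const) : Prop :=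
  D'.dom ⊆ D.dom ∧ ∀ R, D'.rel R = {t | t ∈ D.rel R ∧ ∀ i, t i ∈ D'.dom}

/-- A fact: a relation symbol together with a tuple of constants. -/
def Fact (S : Type) (ar : S → ℕ) (Const : Type) : Type := Σ R : S, Fin (ar R) → Const

/-- The set of facts of a database. -/
def facts (D : Database S ar Const) : Set (Fact S ar Const) := { f | f.2 ∈ D.rel f.1 }

/-- The active domain: the constants occurring in some fact. -/
def aadom (D : Database S ar Const) : Set Const := { c | ∃ f ∈ facts D, ∃ i, f.2 i = c }

/-- Renaming the constants of a fact. -/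
def mapFact (h : C1 → C2) (f : Fact S ar C1) : Fact S ar C2 := ⟨f.1, fun i => h (f.2 i)⟩

/-- The direct product `D ⊗ D'` of two databases. -/
def dprod (D : Database S ar C1) (D' : Database S ar C2) : Database S ar (C1 × C2) where
  dom := D.dom ×ˢ D'.dom
  rel R := { t | (fun i => (t i).1) ∈ D.rel R ∧ (fun i => (t i).2) ∈ D'.rel R }
  rel_dom := by
    rintro R t ⟨h1, h2⟩ i
    exact Finset.mem_product.mpr ⟨D.rel_dom R _ h1 i, D'.rel_dom R _ h2 i⟩

/-- The intersection `D ∩ D'` of two databases over the same constants: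
domain-wise and relation-wise intersection. -/
noncomputable def dinter (D D' : Database S ar Const) : Database S ar Const :=
  letI := Classical.decEq Const
  { dom := D.dom ∩ D'.dom
    rel := fun R => D.rel R ∩ D'.rel R
    rel_dom := by
      rintro R t ⟨h1, h2⟩ i
      exact Finset.mem_inter.mpr ⟨D.rel_dom R t h1 i, D'.rel_dom R t h2 i⟩ }

/-- Isomorphism of databases (possibly over different constant types). -/
def Iso (D : Database S ar C1) (D' : Database S ar C2) : Prop :=
  ∃ h : C1 → C2, Set.BijOn h ↑D.dom ↑D'.dom ∧
    ∀ R : S, ∀ t : Fin (ar R) → C1, (∀ i, t i ∈ D.dom) →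
      (t ∈ D.rel R ↔ (fun i => h (t i)) ∈ D'.rel R)

/-- A 1-critical database: singleton domain `{c}` and every relation is the
full relation `{c}^{ar(R)}`. -/
def OneCritical (D : Database S ar Const) : Prop :=
  ∃ c : Const, D.dom = {c} ∧ ∀ R : S, D.rel R = {fun _ => c}

/-- `C` is (finitely) axiomatized by the finite sets `Ts` of tgds and `Es` of egds. -/
def FinAx (C : Set (Database S ar Const)) (Ts : Set (TGD S ar)) (Es : Set (EGD S ar)) : Prop :=
  Ts.Finite ∧ Es.Finite ∧
    ∀ D : Database S ar Const, D ∈ C ↔ (∀ σ ∈ Ts, SatTGD D σ) ∧ (∀ θ ∈ Es, SatEGD D θ)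

/-- Domain independence: membership in `C` depends only on the set of facts. -/
def DomainIndependent (C : Set (Database S ar Const)) : Prop :=
  ∀ D ∈ C, ∀ D' : Database S ar Const, facts D' = facts D → D' ∈ C

/-- `n`-modularity. -/
def NModular (C : Set (Database S ar Const)) (n : ℕ) : Prop :=
  ∀ D : Database S ar Const, D ∉ C →
    ∃ D' : Database S ar Const, Sub D' D ∧ D'.dom.card ≤ n ∧ D' ∉ C

/-- Modularity: `n`-modularity for some `n`. -/
def Modular (C : Set (Database S ar Const)) : Prop := ∃ n, NModular C n

/-- Closure under subdatabases. -/
def ClosedSub (C : Set (Database S ar Const)) : Prop :=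
  ∀ D ∈ C, ∀ D' : Database S ar Const, Sub D' D → D' ∈ C

/-- Closure under (binary) intersections. -/
def ClosedInter (C : Set (Database S ar Const)) : Prop :=
  ∀ D ∈ C, ∀ D' ∈ C, dinter D D' ∈ C

/-- Closure under isomorphisms. -/
def ClosedIso (C : Set (Database S ar Const)) : Prop :=
  ∀ D ∈ C, ∀ D' : Database S ar Const, Iso D D' → D' ∈ C

/-- Closure under (binary) direct products, up to isomorphic copies over `Const`. -/
def ClosedProd (C : Set (Database S ar Const)) : Prop :=
  ∀ D ∈ C, ∀ D' ∈ C, ∃ E ∈ C, Iso (dprod D D') E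

/-- `C` is `(n,m)`-locally embeddable in `D`. -/
def LocEmb (C : Set (Database S ar Const)) (n m : ℕ) (D : Database S ar Const) : Prop :=
  ∀ E : Database S ar Const, Sub E D → (aadom E).ncard ≤ n →
    ∃ DE ∈ C, facts E ⊆ facts DE ∧
      ∀ D' : Database S ar Const,
        facts E ⊆ facts D' → Sub D' DE → (aadom D').ncard ≤ (aadom E).ncard + m →
        ∃ h : Const → Const,
          (∀ c ∈ aadom D', h c ∈ aadom D) ∧
          (∀ c ∈ aadom E, h c = c) ∧
          (∀ f ∈ facts D', mapFact h f ∈ facts D)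

/-- `(n,m)`-locality of a collection of databases. -/
def IsLocal (C : Set (Database S ar Const)) (n m : ℕ) : Prop :=
  ∀ D : Database S ar Const, LocEmb C n m D → D ∈ C

/-- The facts of `D` restricted to the set `A` of constants. -/
def restrictFacts (D : Database S ar Const) (A : Set Const) : Set (Fact S ar Const) :=
  { f | f ∈ facts D ∧ ∀ i, f.2 i ∈ A }


/-- Restriction of a database to a finite set of constants. -/
noncomputable def restrict (D : Database S ar Const) (A : Finset Const) :
    Database S ar Const :=
  letI := Classical.decEq Const
  { dom := A ∩ D.dom
    rel := fun R => {t | t ∈ D.rel R ∧ ∀ i, t i ∈ A ∩ D.dom}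
    rel_dom := fun _ t ht i => (ht.2 i) }

lemma sub_restrict (D : Database S ar Const) (A : Finset Const) :
    Sub (restrict D A) D := by
  classical
  refine ⟨Finset.inter_subset_right, fun R => ?_⟩
  rfl

lemma facts_mono {D' D : Database S ar Const} (h : Sub D' D) :
    facts D' ⊆ facts D := by
  intro f hf
  have hf' : f.2 ∈ D'.rel f.1 := hf
  rw [h.2 f.1] at hf'
  exact hf'.1

lemma aadom_mono {D' D : Database S ar Const} (h : facts D' ⊆ facts D) :
    aadom D' ⊆ aadom D := by
  rintro c ⟨f, hf, i, hi⟩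
  exact ⟨f, h hf, i, hi⟩

lemma aadom_sub_dom (D : Database S ar Const) : aadom D ⊆ ↑D.dom := by
  rintro c ⟨f, hf, i, hi⟩
  exact hi ▸ D.rel_dom f.1 f.2 hf i

lemma aadom_finite (D : Database S ar Const) : (aadom D).Finite :=
  D.dom.finite_toSet.subset (aadom_sub_dom D)

lemma mapFact_id (f : Fact S ar Const) : mapFact (fun c => c) f = f := rfl

lemma facts_of_sub {D' D : Database S ar Const} (h : Sub D' D)
    {f : Fact S ar Const} (hf : f ∈ facts D) (hdom : ∀ i, f.2 i ∈ D'.dom) :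
    f ∈ facts D' := by
  have : f.2 ∈ D'.rel f.1 := by
    rw [h.2 f.1]; exact ⟨hf, hdom⟩
  exact this

/-- (n,0)-locality is equivalent to the conjunction of domain
independence, n-modularity, and closure under subdatabases. -/
theorem n_zero_local_iff
    (har : ∀ R : S, 0 < ar R)
    (C : Set (Database S ar Const)) (hiso : ClosedIso C) (n : ℕ) :
    IsLocal C n 0 ↔ (DomainIndependent C ∧ NModular C n ∧ ClosedSub C) := by
  classical
  constructor
  · intro hloc
    refine ⟨?_, ?_, ?_⟩
    · -- domain independence
      intro D hD D' hfacts
      apply hloc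
      intro E hE _
      refine ⟨D, hD, ?_, ?_⟩
      · exact hfacts ▸ facts_mono hE
      · intro D'' hED'' hsub _
        refine ⟨fun c => c, ?_, fun _ _ => rfl, ?_⟩
        · intro c hc
          exact aadom_mono (hfacts ▸ facts_mono hsub) hc
        · intro f hf
          rw [mapFact_id]
          exact hfacts ▸ facts_mono hsub hf
    · -- n-modularity
      intro D hD
      by_contra hcon
      push_neg at hcon
      apply hD
      apply hloc
      intro E hE hcard
      have hEfin : (aadom E).Finite := aadom_finite E
      set A : Finset Const := hEfin.toFinset with hA
      have hAsubD : ↑A ⊆ (↑D.dom : Set Const) := by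
        rw [hA, Set.Finite.coe_toFinset]
        exact (aadom_sub_dom E).trans (by exact_mod_cast Finset.coe_subset.mpr hE.1)
      set D₀ := restrict D A with hD₀
      have hD₀sub : Sub D₀ D := sub_restrict D A
      have hD₀card : D₀.dom.card ≤ n := by
        calc D₀.dom.card ≤ A.card := Finset.card_le_card Finset.inter_subset_left
        _ = (aadom E).ncard := by
            rw [hA, ← Set.ncard_coe_finset, Set.Finite.coe_toFinset]
        _ ≤ n := hcard
      have hD₀C : D₀ ∈ C := hcon D₀ hD₀sub hD₀card
      refine ⟨D₀, hD₀C, ?_, ?_⟩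
      · -- facts E ⊆ facts D₀
        intro f hf
        refine facts_of_sub hD₀sub (facts_mono hE hf) ?_
        intro i
        refine Finset.mem_inter.mpr ⟨?_, ?_⟩
        · rw [hA, Set.Finite.mem_toFinset]
          exact ⟨f, hf, i, rfl⟩
        · exact hE.1 (E.rel_dom f.1 f.2 hf i)
      · intro D'' hED'' hsub _
        refine ⟨fun c => c, ?_, fun _ _ => rfl, ?_⟩
        · intro c hc
          exact aadom_mono ((facts_mono hsub).trans (facts_mono hD₀sub)) hc
        · intro f hf
          rw [mapFact_id]
          exact facts_mono hD₀sub (facts_mono hsub hf)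
    · -- closed under subdatabases
      intro D hD D₀ hsub₀
      apply hloc
      intro E hE _
      refine ⟨D, hD, (facts_mono hE).trans (facts_mono hsub₀), ?_⟩
      intro D'' hED'' hsub hcard''
      have heq : aadom D'' = aadom E := by
        have h1 : aadom E ⊆ aadom D'' := aadom_mono hED''
        exact (Set.eq_of_subset_of_ncard_le h1 hcard'' (aadom_finite D'')).symm
      refine ⟨fun c => c, ?_, fun _ _ => rfl, ?_⟩
      · intro c hc
        rw [heq] at hc
        exact aadom_mono (facts_mono hE) hc
      · intro f hf
        rw [mapFact_id]
        refine facts_of_sub hsub₀ (facts_mono hsub hf) ?_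
        intro i
        have : f.2 i ∈ aadom D'' := ⟨f, hf, i, rfl⟩
        rw [heq] at this
        exact hE.1 (aadom_sub_dom E this)
  · rintro ⟨hdi, hmod, hcs⟩
    intro D hD
    by_contra hDC
    obtain ⟨D₀, hsub₀, hcard₀, hD₀C⟩ := hmod D hDC
    have haE : (aadom D₀).ncard ≤ n := by
      calc (aadom D₀).ncard ≤ D₀.dom.card := by
            rw [← Set.ncard_coe_finset]
            exact Set.ncard_le_ncard (aadom_sub_dom D₀) D₀.dom.finite_toSet
      _ ≤ n := hcard₀
    obtain ⟨DE, hDEC, hfE, hprop⟩ := hD D₀ hsub₀ haE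
    -- Build D' := restriction of DE to aadom D₀
    set A : Finset Const := (aadom_finite D₀).toFinset with hA
    have hAsubDE : ↑A ⊆ (↑DE.dom : Set Const) := by
      rw [hA, Set.Finite.coe_toFinset]
      exact (aadom_mono hfE).trans (aadom_sub_dom DE)
    set D' := restrict DE A with hD'
    have hsub' : Sub D' DE := sub_restrict DE A
    have hfED' : facts D₀ ⊆ facts D' := by
      intro f hf
      refine facts_of_sub hsub' (hfE hf) ?_
      intro i
      refine Finset.mem_inter.mpr ⟨?_, ?_⟩
      · rw [hA, Set.Finite.mem_toFinset]
        exact ⟨f, hf, i, rfl⟩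
      · exact hAsubDE (by rw [hA, Set.Finite.coe_toFinset]; exact ⟨f, hf, i, rfl⟩)
    have haD' : aadom D' ⊆ aadom D₀ := by
      intro c hc
      have hc' : c ∈ (↑D'.dom : Set Const) := aadom_sub_dom D' hc
      have : c ∈ A := (Finset.mem_inter.mp hc').1
      rw [hA, Set.Finite.mem_toFinset] at this
      exact this
    have hcard' : (aadom D').ncard ≤ (aadom D₀).ncard + 0 := by
      simpa using Set.ncard_le_ncard haD' (aadom_finite D₀)
    obtain ⟨h, hh1, hh2, hh3⟩ := hprop D' hfED' hsub' hcard'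
    -- facts D' ⊆ facts D₀
    have hfD'D₀ : facts D' ⊆ facts D₀ := by
      intro f hf
      have hconst : ∀ i, f.2 i ∈ aadom D₀ := fun i => haD' ⟨f, hf, i, rfl⟩
      have hmap : mapFact h f ∈ facts D := hh3 f hf
      have hid : mapFact h f = f := by
        unfold mapFact
        congr 1
        funext i
        exact hh2 _ (hconst i)
      rw [hid] at hmap
      refine facts_of_sub hsub₀ hmap ?_
      intro i
      exact aadom_sub_dom D₀ (hconst i)
    have hfacts_eq : facts D' = facts D₀ :=
      le_antisymm hfD'D₀ hfED'
    have hD'C : D' ∈ C := hcs DE hDEC D' hsub'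
    exact hD₀C (hdi D' hD'C D₀ hfacts_eq.symm)

end DB
end

section
/- Let C be a collection of databases (closed under isomorphisms) over a finite schema that is finitely axiomatizable by full tgds and egds. Then C is 1-critical, domain independent, modular, closed under subdatabases, and closed under intersections. -/
namespace DB

variable {S Const C1 C2 : Type} {ar : S → ℕ}

/-- Eliminate an element of `Fin n` when `n = 0`. -/
def finZeroElim' {n : ℕ} (hn : n = 0) (v : Fin n) {α : Sort _} : α :=
  absurd v.2 (by omega)

lemma fin_fun_eq {n : ℕ} (hn : n = 0) {α : Type _} (g g' : Fin n → α) : g = g' :=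
  funext fun v => finZeroElim' hn v

/-- Transfer of tgd satisfaction along relation equivalence. -/
lemma satTGD_of_relEq {D D' : Database S ar Const}
    (hrel : ∀ R t, t ∈ D.rel R ↔ t ∈ D'.rel R)
    (σ : TGD S ar) (hσ : σ.Full) (hs : SatTGD D σ) : SatTGD D' σ := by
  intro h _ hbody
  have hbodyD : ∀ a ∈ σ.body, holdsAtom D h a := fun a ha => (hrel _ _).mpr (hbody a ha)
  have hdomD : ∀ v, h v ∈ D.dom := by
    intro v
    obtain ⟨a, ha, i, hi⟩ := σ.body_vars v
    simpa [hi] using D.rel_dom a.1 _ (hbodyD a ha) i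
  obtain ⟨g, _, hhead⟩ := hs h hdomD hbodyD
  exact ⟨g, fun v => finZeroElim' hσ v, fun a ha => (hrel _ _).mp (hhead a ha)⟩

/-- Transfer of egd satisfaction along relation equivalence. -/
lemma satEGD_of_relEq {D D' : Database S ar Const}
    (hrel : ∀ R t, t ∈ D.rel R ↔ t ∈ D'.rel R)
    (θ : EGD S ar) (hs : SatEGD D θ) : SatEGD D' θ := by
  intro h _ hbody
  have hbodyD : ∀ a ∈ θ.body, holdsAtom D h a := fun a ha => (hrel _ _).mpr (hbody a ha)
  have hdomD : ∀ v, h v ∈ D.dom := by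
    intro v
    obtain ⟨a, ha, i, hi⟩ := θ.body_vars v
    simpa [hi] using D.rel_dom a.1 _ (hbodyD a ha) i
  exact hs h hdomD hbodyD

/-- Restriction of a database to a subset of its domain. -/
def restrictDB (D : Database S ar Const) (A : Finset Const) (hA : A ⊆ D.dom) :
    Database S ar Const where
  dom := A
  rel R := {t | t ∈ D.rel R ∧ ∀ i, t i ∈ A}
  rel_dom := fun _ t ht i => ht.2 i

lemma restrictDB_sub (D : Database S ar Const) (A : Finset Const) (hA : A ⊆ D.dom) :
    Sub (restrictDB D A hA) D := ⟨hA, fun _ => rfl⟩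

/-- a collection finitely axiomatizable by full tgds and egds is
1-critical, domain independent, modular, closed under subdatabases, and closed
under intersections. -/
theorem finax_full_tgds_egds_properties [Nonempty Const]
    (har : ∀ R : S, 0 < ar R)
    (C : Set (Database S ar Const)) (Ts : Set (TGD S ar)) (Es : Set (EGD S ar))
    (hax : FinAx C Ts Es) (hfull : ∀ sigma ∈ Ts, sigma.Full) :
    (∃ D ∈ C, OneCritical D) ∧ DomainIndependent C ∧ Modular C ∧
      ClosedSub C ∧ ClosedInter C := by
  classical
  obtain ⟨hTfin, hEfin, hiff⟩ := hax
  refine ⟨?_, ?_, ?_, ?_, ?_⟩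
  · -- 1-critical
    obtain ⟨c⟩ := ‹Nonempty Const›
    refine ⟨⟨{c}, fun R => {fun _ => c}, ?_⟩, ?_, c, rfl, fun R => rfl⟩
    · rintro R t ht i
      rw [Set.mem_singleton_iff] at ht
      subst ht
      exact Finset.mem_singleton_self c
    · rw [hiff]
      constructor
      · intro σ hσ h hdom hbody
        refine ⟨fun _ => c, fun _ => Finset.mem_singleton_self c, ?_⟩
        intro a ha
        show _ ∈ ({fun _ => c} : Set _)
        rw [Set.mem_singleton_iff]
        funext i
        cases hv : a.2 i with
        | inl x =>
          simp only [Sum.elim_inl]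
          exact Finset.mem_singleton.mp (hdom (Sum.inl x))
        | inr z => simp
      · intro θ hθ h hdom hbody
        rw [Finset.mem_singleton.mp (hdom θ.lhs), Finset.mem_singleton.mp (hdom θ.rhs)]
  · -- domain independence
    intro D hD D' hfacts
    have hrel : ∀ R t, t ∈ D.rel R ↔ t ∈ D'.rel R := by
      intro R t
      exact (Set.ext_iff.mp hfacts ⟨R, t⟩).symm
    rw [hiff] at hD ⊢
    exact ⟨fun σ hσ => satTGD_of_relEq hrel σ (hfull σ hσ) (hD.1 σ hσ),
      fun θ hθ => satEGD_of_relEq hrel θ (hD.2 θ hθ)⟩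
  · -- modularity
    refine ⟨(hTfin.toFinset.sup fun σ => σ.nx + σ.ny) ⊔ (hEfin.toFinset.sup fun θ => θ.nx), ?_⟩
    intro D hD
    rw [hiff, not_and_or] at hD
    rcases hD with hD | hD
    · push_neg at hD
      obtain ⟨σ, hσ, hviol⟩ := hD
      unfold SatTGD at hviol
      push_neg at hviol
      obtain ⟨h, hdom, hbody, hng⟩ := hviol
      set A : Finset Const := Finset.image h Finset.univ with hA
      have hAD : A ⊆ D.dom := by
        intro x hx
        obtain ⟨v, _, rfl⟩ := Finset.mem_image.mp hx
        exact hdom v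
      refine ⟨restrictDB D A hAD, restrictDB_sub D A hAD, ?_, ?_⟩
      · calc A.card ≤ Finset.univ.card := Finset.card_image_le
          _ = σ.nx + σ.ny := by simp
          _ ≤ _ := le_trans (Finset.le_sup (f := fun σ => σ.nx + σ.ny) (hTfin.mem_toFinset.mpr hσ)) le_sup_left
      · rw [hiff]
        rintro ⟨hsT, _⟩
        obtain ⟨g, hgd, hgh⟩ := hsT σ hσ h
          (fun v => Finset.mem_image_of_mem h (Finset.mem_univ v))
          (fun a ha => ⟨hbody a ha, fun i => Finset.mem_image_of_mem h (Finset.mem_univ _)⟩)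
        obtain ⟨a, ha, hna⟩ := hng g (fun v => hAD (hgd v))
        exact hna (hgh a ha).1
    · push_neg at hD
      obtain ⟨θ, hθ, hviol⟩ := hD
      unfold SatEGD at hviol
      push_neg at hviol
      obtain ⟨h, hdom, hbody, hne⟩ := hviol
      set A : Finset Const := Finset.image h Finset.univ with hA
      have hAD : A ⊆ D.dom := by
        intro x hx
        obtain ⟨v, _, rfl⟩ := Finset.mem_image.mp hx
        exact hdom v
      refine ⟨restrictDB D A hAD, restrictDB_sub D A hAD, ?_, ?_⟩
      · calc A.card ≤ Finset.univ.card := Finset.card_image_le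
          _ = θ.nx := by simp
          _ ≤ _ := le_trans (Finset.le_sup (f := fun θ => θ.nx) (hEfin.mem_toFinset.mpr hθ)) le_sup_right
      · rw [hiff]
        rintro ⟨_, hsE⟩
        exact hne (hsE θ hθ h
          (fun v => Finset.mem_image_of_mem h (Finset.mem_univ v))
          (fun a ha => ⟨hbody a ha, fun i => Finset.mem_image_of_mem h (Finset.mem_univ _)⟩))
  · -- closed under subdatabases
    intro D hD D' hsub
    rw [hiff] at hD ⊢
    constructor
    · intro σ hσ h hdom hbody
      have hσf : σ.nz = 0 := hfull σ hσ
      have hbodyD : ∀ a ∈ σ.body, holdsAtom D h a := by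
        intro a ha
        have := hbody a ha
        rw [holdsAtom, hsub.2] at this
        exact this.1
      obtain ⟨g, _, hhead⟩ := hD.1 σ hσ h (fun v => hsub.1 (hdom v)) hbodyD
      refine ⟨g, fun v => finZeroElim' hσf v, ?_⟩
      intro a ha
      rw [holdsAtom, hsub.2]
      refine ⟨hhead a ha, ?_⟩
      intro i
      show Sum.elim _ g (a.2 i) ∈ D'.dom
      cases hv : a.2 i with
      | inl x => simpa using hdom (Sum.inl x)
      | inr z => exact finZeroElim' hσf z
    · intro θ hθ h hdom hbody
      have hbodyD : ∀ a ∈ θ.body, holdsAtom D h a := by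
        intro a ha
        have := hbody a ha
        rw [holdsAtom, hsub.2] at this
        exact this.1
      exact hD.2 θ hθ h (fun v => hsub.1 (hdom v)) hbodyD
  · -- closed under intersections
    intro D hD D' hD'
    rw [hiff] at hD hD' ⊢
    constructor
    · intro σ hσ h hdom hbody
      have hσf : σ.nz = 0 := hfull σ hσ
      have hdom1 : ∀ v, h v ∈ D.dom := fun v => (Finset.mem_inter.mp (hdom v)).1
      have hdom2 : ∀ v, h v ∈ D'.dom := fun v => (Finset.mem_inter.mp (hdom v)).2
      have hbody1 : ∀ a ∈ σ.body, holdsAtom D h a := fun a ha => (hbody a ha).1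
      have hbody2 : ∀ a ∈ σ.body, holdsAtom D' h a := fun a ha => (hbody a ha).2
      obtain ⟨g1, _, hh1⟩ := hD.1 σ hσ h hdom1 hbody1
      obtain ⟨g2, _, hh2⟩ := hD'.1 σ hσ h hdom2 hbody2
      refine ⟨g1, fun v => finZeroElim' hσf v, ?_⟩
      intro a ha
      refine ⟨hh1 a ha, ?_⟩
      rw [fin_fun_eq hσf g1 g2]
      exact hh2 a ha
    · intro θ hθ h hdom hbody
      exact hD.2 θ hθ h (fun v => (Finset.mem_inter.mp (hdom v)).1)
        (fun a ha => (hbody a ha).1)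

end DB
end
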